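/- Suppose X ∈ ℝ^{d_in×n} has no two identical columns, no zero columns, and satisfies n > rank(X). If σ: ℝ → ℝ is twice differentiable at 0 with σ(0) = 0, σ'(0) ≠ 0, and σ''(0) ≠ 0, then there exists u ∈ ℝ^{d_in} such that σ(uᵀX) (with σ applied entrywise) is a nonzero row vector and σ(uᵀX) does not lie in the row space of X. -/

import Mathlib

/-!
If the conclusion failed, the row space `V` of `X` would be invariant under entrywise `σ`.
Since `σ (t * a) = σ'(0) t a + σ''(0) t² a² / 2 + o(t²)`, letting `t → 0` in
`(σ (t • a) - σ'(0) t • a) / t²` shows that `V` is closed under entrywise squares, hence, by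
polarization, under entrywise products. A space of functions on the columns that is closed under
products, separates the columns and vanishes at none of them contains every indicator function,
so `V = ℝⁿ`, contradicting `rank X < n`.
-/

open scoped BigOperators

namespace CoLA

noncomputable section

/-- Frobenius norm of a real matrix. -/
def frobNorm {m n : ℕ} (M : Matrix (Fin m) (Fin n) ℝ) : ℝ :=
  Real.sqrt (∑ i, ∑ j, (M i j) ^ 2)

/-- Entrywise application of `σ` to a matrix. -/
def entrywise (σ : ℝ → ℝ) {m n : ℕ} (M : Matrix (Fin m) (Fin n) ℝ) :
    Matrix (Fin m) (Fin n) ℝ :=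
  Matrix.of fun i j => σ (M i j)

/-- `E_σ(r)`. -/
def Esig (σ : ℝ → ℝ) {din dout n : ℕ} (X : Matrix (Fin din) (Fin n) ℝ)
    (Y : Matrix (Fin dout) (Fin n) ℝ) (r : ℕ) : ℝ :=
  ⨅ (A : Matrix (Fin r) (Fin din) ℝ), ⨅ (B : Matrix (Fin dout) (Fin r) ℝ),
    frobNorm (Y - B * entrywise σ (A * X))

/-- `E_id(r)`. -/
def Eid {din dout n : ℕ} (X : Matrix (Fin din) (Fin n) ℝ)
    (Y : Matrix (Fin dout) (Fin n) ℝ) (r : ℕ) : ℝ :=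
  ⨅ (A : Matrix (Fin r) (Fin din) ℝ), ⨅ (B : Matrix (Fin dout) (Fin r) ℝ),
    frobNorm (Y - B * A * X)

/-- The (unsorted) singular values of `M`: square roots of eigenvalues of `Mᴴ * M`. -/
def svAux {m n : ℕ} (M : Matrix (Fin m) (Fin n) ℝ) : Fin n → ℝ :=
  fun i => Real.sqrt ((by simpa using Matrix.isHermitian_conjTranspose_mul_self M : (Matrix.transpose M * M).IsHermitian).eigenvalues i)

/-- Singular values of `M` sorted in non-increasing order (0-indexed). -/
def sv {m n : ℕ} (M : Matrix (Fin m) (Fin n) ℝ) : Fin n → ℝ :=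
  fun i => svAux M (Tuple.sort (fun j => -(svAux M j)) i)

/-- `k`-th largest singular value (1-indexed, `0` for `k > n`). -/
def sVal {m n : ℕ} (M : Matrix (Fin m) (Fin n) ℝ) (k : ℕ) : ℝ :=
  if h : k - 1 < n then sv M ⟨k - 1, h⟩ else 0

/-- `s_{>k}(M) = √(∑_{j>k} s_j(M)²)` (with `j` 1-indexed). -/
def sGt {m n : ℕ} (M : Matrix (Fin m) (Fin n) ℝ) (k : ℕ) : ℝ :=
  Real.sqrt (∑ j : Fin n, if k ≤ (j : ℕ) then (sv M j) ^ 2 else 0)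

/-- Spectral (ℓ²-operator) norm of a real matrix. -/
def specNorm {m n : ℕ} (M : Matrix (Fin m) (Fin n) ℝ) : ℝ :=
  ‖LinearMap.toContinuousLinearMap (Matrix.toEuclideanLin M)‖

/-- Effective rank `r_α(M)`: the least `k` with `∑_{i≤k} s_i² ≥ α ∑_i s_i²`. -/
def effRank {m n : ℕ} (M : Matrix (Fin m) (Fin n) ℝ) (α : ℝ) : ℕ :=
  sInf {k : ℕ |
    α * ∑ i : Fin n, (sv M i) ^ 2 ≤ ∑ i : Fin n, if (i : ℕ) < k then (sv M i) ^ 2 else 0}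

/-- Row space of `X` inside `Fin n → ℝ`. -/
def rowSpace {d n : ℕ} (X : Matrix (Fin d) (Fin n) ℝ) : Submodule ℝ (Fin n → ℝ) :=
  Submodule.span ℝ (Set.range X)

/-- Row space of `X` as a submodule of Euclidean space. -/
def rowSpaceE {d n : ℕ} (X : Matrix (Fin d) (Fin n) ℝ) :
    Submodule ℝ (EuclideanSpace ℝ (Fin n)) :=
  Submodule.span ℝ (Set.range fun i => (WithLp.equiv 2 (Fin n → ℝ)).symm (X i))

/-- Row-wise orthogonal projection of the rows of `Y` onto the subspace `S`. -/
def projRows {dout n : ℕ} (S : Submodule ℝ (EuclideanSpace ℝ (Fin n)))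
    (Y : Matrix (Fin dout) (Fin n) ℝ) : Matrix (Fin dout) (Fin n) ℝ :=
  Matrix.of fun i => WithLp.equiv 2 (Fin n → ℝ)
    ((S.orthogonalProjectionOnto ((WithLp.equiv 2 (Fin n → ℝ)).symm (Y i)) :
      EuclideanSpace ℝ (Fin n)))

/-- Row-wise orthogonal projection onto the orthogonal complement of `span{v}`. -/
def projVperp {dout n : ℕ} (v : Fin n → ℝ) (Y : Matrix (Fin dout) (Fin n) ℝ) :
    Matrix (Fin dout) (Fin n) ℝ :=
  projRows (Submodule.span ℝ {(WithLp.equiv 2 (Fin n → ℝ)).symm v})ᗮ Y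

end

end CoLA

open Filter Topology

theorem eventually_differentiableAt_of_deriv_ne_zero {σ : ℝ → ℝ} {x : ℝ}
    (hσ2 : DifferentiableAt ℝ (deriv σ) x) (hσ' : deriv σ x ≠ 0) :
    ∀ᶠ y in 𝓝 x, DifferentiableAt ℝ σ y :=
  (hσ2.continuousAt.eventually_ne hσ').mono fun _ => differentiableAt_of_deriv_ne_zero

theorem tendsto_sub_deriv_mul_div_sq {σ : ℝ → ℝ} (hσ0 : σ 0 = 0)
    (hσ2 : DifferentiableAt ℝ (deriv σ) 0) (hσ' : deriv σ 0 ≠ 0) :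
    Tendsto (fun t => (σ t - deriv σ 0 * t) / t ^ 2) (𝓝[≠] 0)
      (𝓝 (deriv (deriv σ) 0 / 2)) := by
  have hdiff := eventually_differentiableAt_of_deriv_ne_zero hσ2 hσ'
  have hcont : ContinuousAt (fun t => σ t - deriv σ 0 * t) 0 :=
    hdiff.self_of_nhds.continuousAt.sub (continuousAt_const.mul continuousAt_id)
  refine HasDerivAt.lhopital_zero_nhdsNE (f' := fun t => deriv σ t - deriv σ 0)
    (g' := fun t => 2 * t) ?_ ?_ ?_ ?_ ?_ ?_
  · filter_upwards [eventually_nhdsWithin_of_eventually_nhds hdiff] with t ht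
    exact ht.hasDerivAt.sub (by simpa using (hasDerivAt_id t).const_mul (deriv σ 0))
  · exact Eventually.of_forall fun t => by simpa using hasDerivAt_pow 2 t
  · filter_upwards [self_mem_nhdsWithin] with t ht
    exact mul_ne_zero two_ne_zero ht
  · simpa [hσ0] using hcont.tendsto.mono_left nhdsWithin_le_nhds
  · simpa using ((continuous_pow 2).tendsto (0 : ℝ)).mono_left nhdsWithin_le_nhds
  · refine ((hasDerivAt_iff_tendsto_slope.1 hσ2.hasDerivAt).div_const 2).congr' ?_
    filter_upwards [self_mem_nhdsWithin] with t ht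
    rw [slope_def_field, sub_zero, div_div, mul_comm]

theorem tendsto_comp_mul_sub_deriv_mul_div_sq {σ : ℝ → ℝ} (hσ0 : σ 0 = 0)
    (hσ2 : DifferentiableAt ℝ (deriv σ) 0) (hσ' : deriv σ 0 ≠ 0) (a : ℝ) :
    Tendsto (fun t => (σ (t * a) - deriv σ 0 * (t * a)) / t ^ 2) (𝓝[≠] 0)
      (𝓝 (deriv (deriv σ) 0 / 2 * a ^ 2)) := by
  rcases eq_or_ne a 0 with rfl | ha
  · simp [hσ0]
  have hmul : Tendsto (fun t => t * a) (𝓝[≠] 0) (𝓝[≠] 0) := by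
    refine tendsto_nhdsWithin_of_tendsto_nhds_of_eventually_within _ ?_ ?_
    · simpa using ((continuous_mul_const a).tendsto 0).mono_left nhdsWithin_le_nhds
    · filter_upwards [self_mem_nhdsWithin] with t ht using mul_ne_zero ht ha
  refine (((tendsto_sub_deriv_mul_div_sq hσ0 hσ2 hσ').comp hmul).mul_const (a ^ 2)).congr' ?_
  filter_upwards [self_mem_nhdsWithin] with t ht
  simp only [Function.comp_apply]
  field_simp [ht, ha]

namespace Submodule

variable {ι K : Type*} [Field K] {V : Submodule K (ι → K)}

theorem exists_mem_ne_zero_eq_zero_on (hmul : ∀ v ∈ V, ∀ w ∈ V, v * w ∈ V)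
    (hsep : ∀ j k, j ≠ k → ∃ v ∈ V, v j ≠ v k) (hne : ∀ j, ∃ v ∈ V, v j ≠ 0)
    [DecidableEq ι] (j : ι) (s : Finset ι) (hj : j ∉ s) :
    ∃ g ∈ V, g j ≠ 0 ∧ ∀ k ∈ s, g k = 0 := by
  induction s using Finset.induction_on with
  | empty => simpa using hne j
  | insert k s _ ih =>
    obtain ⟨g, hgV, hgj, hgs⟩ := ih fun h => hj (Finset.mem_insert_of_mem h)
    obtain ⟨v, hvV, hvjk⟩ := hsep j k fun h => hj (h ▸ Finset.mem_insert_self j s)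
    -- `g * (v - v k)` kills `k` and keeps `j`, and lies in `V` without `V` containing constants.
    refine ⟨g * v - v k • g, V.sub_mem (hmul g hgV v hvV) (V.smul_mem _ hgV), ?_, ?_⟩
    · simpa [mul_comm, ← mul_sub] using mul_ne_zero (sub_ne_zero.2 hvjk) hgj
    · simp only [Finset.mem_insert, forall_eq_or_imp]
      refine ⟨by simp [mul_comm], fun l hl => by simp [hgs l hl]⟩

theorem eq_top_of_mul_mem_of_separates [Fintype ι] (hmul : ∀ v ∈ V, ∀ w ∈ V, v * w ∈ V)
    (hsep : ∀ j k, j ≠ k → ∃ v ∈ V, v j ≠ v k) (hne : ∀ j, ∃ v ∈ V, v j ≠ 0) : V = ⊤ := by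
  classical
  have hsingle (j : ι) : Pi.single j 1 ∈ V := by
    obtain ⟨g, hgV, hgj, hg⟩ :=
      exists_mem_ne_zero_eq_zero_on hmul hsep hne j (Finset.univ.erase j) (by simp)
    convert V.smul_mem (g j)⁻¹ hgV using 1
    ext k
    rcases eq_or_ne k j with rfl | hkj
    · simp [hgj]
    · simp [hkj, hg k (by simp [hkj])]
  refine eq_top_iff'.2 fun x => ?_
  rw [pi_eq_sum_univ' x]
  exact V.sum_mem fun j _ => V.smul_mem _ (hsingle j)

theorem mul_mem_of_mul_self_mem [CharZero K] (hsq : ∀ v ∈ V, v * v ∈ V) {v w : ι → K}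
    (hv : v ∈ V) (hw : w ∈ V) : v * w ∈ V := by
  have key : v * w = (2⁻¹ : K) • ((v + w) * (v + w) - v * v - w * w) := by
    ext j
    simp only [Pi.smul_apply, Pi.sub_apply, Pi.mul_apply, Pi.add_apply, smul_eq_mul]
    field_simp
    ring
  rw [key]
  exact V.smul_mem _ (V.sub_mem (V.sub_mem (hsq _ (V.add_mem hv hw)) (hsq v hv)) (hsq w hw))

end Submodule

theorem Submodule.mul_self_mem_of_comp_mem {ι : Type*} [Finite ι] {V : Submodule ℝ (ι → ℝ)}
    {σ : ℝ → ℝ} (hσ0 : σ 0 = 0) (hσ2 : DifferentiableAt ℝ (deriv σ) 0)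
    (hσ' : deriv σ 0 ≠ 0) (hσ'' : deriv (deriv σ) 0 ≠ 0)
    (hV : ∀ a ∈ V, (fun j => σ (a j)) ∈ V) {a : ι → ℝ} (ha : a ∈ V) : a * a ∈ V := by
  set c := 2 / deriv (deriv σ) 0
  have hlim : Tendsto (fun t => c • (t ^ 2)⁻¹ • ((fun j => σ ((t • a) j)) - (deriv σ 0 * t) • a))
      (𝓝[≠] 0) (𝓝 (a * a)) := by
    refine tendsto_pi_nhds.2 fun j => ?_
    convert (tendsto_comp_mul_sub_deriv_mul_div_sq hσ0 hσ2 hσ' (a j)).const_mul c using 1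
    · ext t
      simp only [Pi.smul_apply, Pi.sub_apply, smul_eq_mul]
      ring
    · simp only [c, Pi.mul_apply]
      field_simp
  refine (Submodule.closed_of_finiteDimensional V).mem_of_tendsto hlim (Eventually.of_forall ?_)
  intro t
  exact V.smul_mem _ (V.smul_mem _ (V.sub_mem (hV _ (V.smul_mem t ha)) (V.smul_mem _ ha)))

namespace CoLA

noncomputable section

theorem stmt1_general {din n : ℕ} (X : Matrix (Fin din) (Fin n) ℝ)
    (hcols : ∀ j k : Fin n, j ≠ k → (fun i => X i j) ≠ (fun i => X i k))
    (hnz : ∀ j : Fin n, (fun i => X i j) ≠ 0)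
    (hrank : X.rank < n)
    (σ : ℝ → ℝ) (hσ0 : σ 0 = 0)
    (hσdiff2 : DifferentiableAt ℝ (deriv σ) 0)
    (hσ' : deriv σ 0 ≠ 0) (hσ'' : deriv (deriv σ) 0 ≠ 0) :
    ∃ u : Fin din → ℝ,
      (fun j => σ (Matrix.vecMul u X j)) ≠ 0 ∧
      (fun j => σ (Matrix.vecMul u X j)) ∉ rowSpace X := by
  by_contra! hσX
  have hrow (i : Fin din) : X i ∈ rowSpace X := Submodule.subset_span (Set.mem_range_self i)
  have hcomp : ∀ a ∈ rowSpace X, (fun j => σ (a j)) ∈ rowSpace X := by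
    intro a ha
    obtain ⟨u, rfl⟩ : a ∈ LinearMap.range X.vecMulLinear := by rwa [range_vecMulLinear]
    by_cases h0 : (fun j => σ (Matrix.vecMul u X j)) = 0
    · exact h0 ▸ (rowSpace X).zero_mem
    · exact hσX u h0
  have hmul : ∀ v ∈ rowSpace X, ∀ w ∈ rowSpace X, v * w ∈ rowSpace X := fun v hv w hw =>
    Submodule.mul_mem_of_mul_self_mem
      (fun a ha => Submodule.mul_self_mem_of_comp_mem hσ0 hσdiff2 hσ' hσ'' hcomp ha) hv hw
  have htop : rowSpace X = ⊤ := by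
    refine Submodule.eq_top_of_mul_mem_of_separates hmul (fun j k hjk => ?_) (fun j => ?_)
    · obtain ⟨i, hi⟩ := Function.ne_iff.1 (hcols j k hjk)
      exact ⟨X i, hrow i, hi⟩
    · obtain ⟨i, hi⟩ := Function.ne_iff.1 (hnz j)
      exact ⟨X i, hrow i, hi⟩
  have hfinrank : X.rank = Module.finrank ℝ (rowSpace X) := X.rank_eq_finrank_span_row
  rw [htop, finrank_top, Module.finrank_fin_fun] at hfinrank
  omega

/-- Proposition 2: if `X` has no two identical columns, no zero
columns, `rank X < n`, and `σ` is twice differentiable at `0` with `σ(0) = 0`,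
`σ'(0) ≠ 0`, `σ''(0) ≠ 0`, then there is `u` such that `σ(uᵀX)` is a nonzero vector
lying outside the row space of `X`. -/
theorem stmt1 {din n : ℕ} (X : Matrix (Fin din) (Fin n) ℝ)
    (hcols : ∀ j k : Fin n, j ≠ k → (fun i => X i j) ≠ (fun i => X i k))
    (hnz : ∀ j : Fin n, (fun i => X i j) ≠ 0)
    (hrank : X.rank < n)
    (σ : ℝ → ℝ) (hσ0 : σ 0 = 0)
    (hσdiff : DifferentiableAt ℝ σ 0) (hσdiff2 : DifferentiableAt ℝ (deriv σ) 0)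
    (hσ' : deriv σ 0 ≠ 0) (hσ'' : deriv (deriv σ) 0 ≠ 0) :
    ∃ u : Fin din → ℝ,
      (fun j => σ (Matrix.vecMul u X j)) ≠ 0 ∧
      (fun j => σ (Matrix.vecMul u X j)) ∉ rowSpace X :=
  stmt1_general X hcols hnz hrank σ hσ0 hσdiff2 hσ' hσ''

end

end CoLA
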